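/- For every s > 0 the integral ∫_{0}^{∞} (Φ'(z))² / ( Φ(z+s) - Φ(z) ) dz is finite. -/

import Mathlib

open MeasureTheory Real Set Filter

/-- The standard normal density `Φ'(z) = (1/√(2π)) e^{-z²/2}`. -/
noncomputable def Φ' (z : ℝ) : ℝ := (Real.sqrt (2 * Real.pi))⁻¹ * Real.exp (-z ^ 2 / 2)

/-- The standard normal cumulative distribution function `Φ`. -/
noncomputable def Φ (z : ℝ) : ℝ := ∫ u in Set.Iic z, Φ' u

/-!
On `[0, ∞)` the density `Φ'` is decreasing, so `Φ(z + s) - Φ(z) ≥ s Φ'(z + s)` for `z ≥ 0`.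
Completing the square gives `Φ'(z)² / Φ'(z + s) = e^{s²} Φ'(z - s)`, hence the integrand is
dominated by the integrable Gaussian `(e^{s²} / s) Φ'(z - s)` on `(0, ∞)`.
-/

lemma Φ'_pos (z : ℝ) : 0 < Φ' z := by
  unfold Φ'
  positivity

lemma continuous_Φ' : Continuous Φ' := by
  unfold Φ'
  fun_prop

lemma integrable_Φ' : Integrable Φ' := by
  have h := (integrable_exp_neg_mul_sq (b := 1 / 2) (by norm_num)).const_mul
    (Real.sqrt (2 * Real.pi))⁻¹
  refine h.congr (Eventually.of_forall fun z => ?_)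
  simp only [Φ']
  ring_nf

lemma antitoneOn_Φ' : AntitoneOn Φ' (Ici 0) := by
  intro x hx y _ hxy
  unfold Φ'
  gcongr

lemma monotone_Φ : Monotone Φ := fun _ _ hab =>
  setIntegral_mono_set integrable_Φ'.integrableOn (Eventually.of_forall fun z => (Φ'_pos z).le)
    (Iic_subset_Iic.2 hab).eventuallyLE

lemma Φ_sub_Φ_eq_intervalIntegral (a b : ℝ) : Φ b - Φ a = ∫ u in a..b, Φ' u := by
  unfold Φ
  exact intervalIntegral.integral_Iic_sub_Iic integrable_Φ'.integrableOn
    integrable_Φ'.integrableOn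

lemma mul_Φ'_le_Φ_add_sub {z s : ℝ} (hz : 0 ≤ z) (hs : 0 ≤ s) :
    s * Φ' (z + s) ≤ Φ (z + s) - Φ z := by
  rw [Φ_sub_Φ_eq_intervalIntegral]
  calc s * Φ' (z + s) = ∫ _ in z..z + s, Φ' (z + s) := by simp
    _ ≤ ∫ u in z..z + s, Φ' u :=
      intervalIntegral.integral_mono_on (by linarith) intervalIntegrable_const
        integrable_Φ'.intervalIntegrable fun u hu =>
          antitoneOn_Φ' (hz.trans hu.1) (hz.trans (by linarith)) hu.2

lemma Φ'_sq_div_Φ'_add (z s : ℝ) : Φ' z ^ 2 / Φ' (z + s) = Real.exp (s ^ 2) * Φ' (z - s) := by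
  rw [div_eq_iff (Φ'_pos _).ne']
  simp only [Φ']
  rw [mul_pow, sq (Real.exp _), ← Real.exp_add]
  have hsquare : Real.exp (s ^ 2) * Real.exp (-(z - s) ^ 2 / 2) * Real.exp (-(z + s) ^ 2 / 2) =
      Real.exp (-z ^ 2 / 2 + -z ^ 2 / 2) := by
    rw [← Real.exp_add, ← Real.exp_add]
    ring_nf
  rw [← hsquare]
  ring

/-- `∫_0^∞ (Φ'(z))² / (Φ(z+s) - Φ(z)) dz` is finite for every `s > 0`. -/
theorem integrable_first_term (s : ℝ) (hs : 0 < s) :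
    IntegrableOn (fun z : ℝ => (Φ' z) ^ 2 / (Φ (z + s) - Φ z)) (Set.Ioi 0) volume := by
  have hdom : Integrable fun z => Real.exp (s ^ 2) / s * Φ' (z - s) :=
    (integrable_Φ'.comp_sub_right s).const_mul _
  have hmeas : Measurable fun z : ℝ => Φ' z ^ 2 / (Φ (z + s) - Φ z) :=
    (continuous_Φ'.measurable.pow_const 2).div
      ((monotone_Φ.measurable.comp (measurable_add_const s)).sub monotone_Φ.measurable)
  refine hdom.integrableOn.mono' hmeas.aestronglyMeasurable ?_
  filter_upwards [ae_restrict_mem measurableSet_Ioi] with z (hz : 0 < z)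
  have hden := mul_Φ'_le_Φ_add_sub hz.le hs.le
  have hpos : 0 < s * Φ' (z + s) := mul_pos hs (Φ'_pos _)
  rw [Real.norm_of_nonneg (div_nonneg (sq_nonneg _) (hpos.trans_le hden).le)]
  calc Φ' z ^ 2 / (Φ (z + s) - Φ z) ≤ Φ' z ^ 2 / (s * Φ' (z + s)) := by gcongr
    _ = Real.exp (s ^ 2) / s * Φ' (z - s) := by
      rw [div_mul_eq_div_div_swap, Φ'_sq_div_Φ'_add]
      ring
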